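/- Suppose |B| ≥ 2 and |S| ≥ 2. Let π̂ be any revenue-maximizing single-seller partition of G. Then for every seller profile τ and every buyer assignment σ in the |S|-seller game, |S|·SW(τ,σ) ≤ (|S|+1)·SW(π̂); that is, competition among the sellers can exceed the welfare of a revenue-maximizing monopoly by a factor of at most 1 + 1/|S|. -/

import Mathlib

open Finset

variable {B G S : Type*} [Fintype B] [Fintype G] [Fintype S]
variable [DecidableEq B] [DecidableEq G] [DecidableEq S]

/-- `v_b(Ḡ)`: buyer `b`'s total valuation of the variants in `Ḡ`. -/
def vsum (v : B → G → ℕ) (b : B) (Gb : Finset G) : ℕ := ∑ g ∈ Gb, v b g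

/-- `V̄1(B̄,Ḡ)`: the largest value among `(v_b(Ḡ))_{b∈B̄}` (`0` if `B̄ = ∅`). -/
def V1 (v : B → G → ℕ) (Bb : Finset B) (Gb : Finset G) : ℕ :=
  Bb.sup (fun b => vsum v b Gb)

/-- `V̄2(B̄,Ḡ)`: the second-largest value, counted with multiplicity
(`0` if `|B̄| ≤ 1`).  It equals the minimum, over removal of one buyer,
of the maximum over the remaining buyers. -/
def V2 (v : B → G → ℕ) (Bb : Finset B) (Gb : Finset G) : ℕ :=
  if h : Bb.Nonempty then Bb.inf' h (fun b => V1 v (Bb.erase b) Gb) else 0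

/-- The set of buyers choosing seller `s` under the assignment `σ`. -/
def buyersOf (σ : B → S) (s : S) : Finset B := univ.filter (fun b => σ b = s)

/-- Buyer `b`'s utility in the multi-seller game. -/
def ubuyer (v : B → G → ℕ) (τ : S → Finpartition (univ : Finset G)) (σ : B → S) (b : B) : ℚ :=
  (Fintype.card G : ℚ)⁻¹ *
    ∑ Gb ∈ (τ (σ b)).parts, max ((vsum v b Gb : ℚ) - (V2 v (buyersOf σ (σ b)) Gb : ℚ)) 0

/-- Seller `s`'s utility in the multi-seller game. -/
def useller (v : B → G → ℕ) (τ : S → Finpartition (univ : Finset G)) (σ : B → S) (s : S) : ℚ :=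
  (Fintype.card G : ℚ)⁻¹ * ∑ Gb ∈ (τ s).parts, (V2 v (buyersOf σ s) Gb : ℚ)

/-- Social welfare in the multi-seller game. -/
def SWm (v : B → G → ℕ) (τ : S → Finpartition (univ : Finset G)) (σ : B → S) : ℚ :=
  ((Fintype.card S : ℚ) * (Fintype.card G : ℚ))⁻¹ *
    ∑ s : S, ∑ Gb ∈ (τ s).parts, (V1 v (buyersOf σ s) Gb : ℚ)

/-- Social welfare in the single-seller (monopoly) game. -/
def SW1 (v : B → G → ℕ) (π : Finpartition (univ : Finset G)) : ℚ :=
  (Fintype.card G : ℚ)⁻¹ * ∑ Gb ∈ π.parts, (V1 v (univ : Finset B) Gb : ℚ)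

/-- The monopolist's revenue. -/
def rev1 (v : B → G → ℕ) (π : Finpartition (univ : Finset G)) : ℚ :=
  (Fintype.card G : ℚ)⁻¹ * ∑ Gb ∈ π.parts, (V2 v (univ : Finset B) Gb : ℚ)

/-- Buyer `b`'s utility in the monopoly game. -/
def ub1 (v : B → G → ℕ) (π : Finpartition (univ : Finset G)) (b : B) : ℚ :=
  (Fintype.card G : ℚ)⁻¹ *
    ∑ Gb ∈ π.parts, max ((vsum v b Gb : ℚ) - (V2 v (univ : Finset B) Gb : ℚ)) 0

/-- `π` refines `π̂`: every block of `π̂` is a union of blocks of `π`. -/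
def IsRefinement (π πhat : Finpartition (univ : Finset G)) : Prop :=
  ∀ t ∈ πhat.parts, ∃ P ⊆ π.parts, t = P.sup id

/-- `σ` is a (pure) Nash equilibrium of the buyers' subgame induced by `τ`. -/
def IsNash (v : B → G → ℕ) (τ : S → Finpartition (univ : Finset G)) (σ : B → S) : Prop :=
  ∀ (b : B) (s : S), ubuyer v τ (Function.update σ b s) b ≤ ubuyer v τ σ b

/-- `p^i(G)`: the number of goods demanded by at least `i` buyers. -/
def pdem (v : B → G → ℕ) (i : ℕ) : ℕ :=
  (univ.filter (fun g : G => i ≤ ∑ b : B, v b g)).card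

/-- The trivial (indiscrete) partition `{G}`, which discloses nothing. -/
def trivPart (G : Type*) [Fintype G] [DecidableEq G] [Nonempty G] :
    Finpartition (univ : Finset G) :=
  Finpartition.indiscrete Finset.univ_nonempty.ne_empty

/-- `(π, f)` is a pure subgame perfect equilibrium of the two-stage game. -/
def IsSPE (v : B → G → ℕ) (π : S → Finpartition (univ : Finset G))
    (f : (S → Finpartition (univ : Finset G)) → (B → S)) : Prop :=
  (∀ τ, IsNash v τ (f τ)) ∧
  ∀ (s : S) (ρ : Finpartition (univ : Finset G)),
    useller v (Function.update π s ρ) (f (Function.update π s ρ)) s ≤ useller v π (f π) s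

/-!
Let `d g` be the number of buyers valuing good `g`. With `|S|` sellers, good `g` adds at most
`min (d g) |S| ≤ min (d g) 2 + (|S| - 2) [2 ≤ d g]` to the competitive welfare. Writing `W` and
`R` for the welfare and revenue of `π̂`, optimality of `π̂` against the partition into singletons
gives `#{g | 2 ≤ d g} ≤ R`, and against a partition that isolates the goods with `2 ≤ d g` and
bundles the remaining goods of buyers two at a time, in order of decreasing value, it gives
`∑ g, min (d g) 2 ≤ 2 R + W`. Since `R ≤ W`, the competitive welfare is at most `(|S| + 1) W`.
-/

namespace Finpartition

variable {α M : Type*} [DecidableEq α] [AddCommMonoid M]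

theorem sum_sum_parts {s : Finset α} (P : Finpartition s) (f : α → M) :
    ∑ t ∈ P.parts, ∑ a ∈ t, f a = ∑ a ∈ s, f a :=
  calc ∑ t ∈ P.parts, ∑ a ∈ t, f a = ∑ a ∈ P.parts.biUnion id, f a := (sum_biUnion P.disjoint).symm
    _ = ∑ a ∈ s, f a := by rw [P.biUnion_parts]

theorem sum_extend {s t u : Finset α} (P : Finpartition s) (hu : u ≠ ∅) (hsu : Disjoint s u)
    (ht : s ⊔ u = t) (f : Finset α → M) :
    ∑ p ∈ (P.extend hu hsu ht).parts, f p = f u + ∑ p ∈ P.parts, f p :=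
  sum_insert fun h => hu <| hsu.symm.eq_bot_of_le <| P.le h

end Finpartition

section Valuations

variable {B G : Type*} {v : B → G → ℕ} {Bb : Finset B} {X : Finset G}

theorem vsum_le_V1 {b : B} (hb : b ∈ Bb) : vsum v b X ≤ V1 v Bb X :=
  le_sup (f := fun b => vsum v b X) hb

theorem V1_le_sum_parts [DecidableEq G] (P : Finpartition X) :
    V1 v Bb X ≤ ∑ t ∈ P.parts, V1 v Bb t :=
  Finset.sup_le fun b hb => by
    change ∑ g ∈ X, v b g ≤ _
    rw [← P.sum_sum_parts]
    exact sum_le_sum fun t _ => vsum_le_V1 hb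

theorem V1_le_sum_min_one (hv : ∀ b g, v b g ≤ 1) :
    V1 v Bb X ≤ ∑ g ∈ X, min 1 (∑ b ∈ Bb, v b g) :=
  Finset.sup_le fun _ hb => sum_le_sum fun g _ =>
    le_min (hv _ g) (single_le_sum (f := fun b => v b g) (fun _ _ => Nat.zero_le _) hb)

theorem sum_vsum_le_V1 (h : ∀ x ∈ Bb, ∀ y ∈ Bb, 0 < vsum v x X → 0 < vsum v y X → x = y) :
    ∑ b ∈ Bb, vsum v b X ≤ V1 v Bb X := by
  by_cases hpos : ∃ x ∈ Bb, 0 < vsum v x X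
  · obtain ⟨x, hx, hx0⟩ := hpos
    rw [sum_eq_single_of_mem x hx fun y hy hyx => ?_]
    · exact vsum_le_V1 hx
    · by_contra hy0
      exact hyx (h y hy x hx (Nat.pos_of_ne_zero hy0) hx0)
  · push Not at hpos
    simp [sum_eq_zero fun b hb => Nat.le_zero.1 (hpos b hb)]

variable [DecidableEq B]

theorem V2_le_V1 : V2 v Bb X ≤ V1 v Bb X := by
  unfold V2
  split_ifs with h
  · exact (inf'_le _ h.choose_spec).trans (sup_mono (erase_subset _ _))
  · exact Nat.zero_le _

theorem min_le_V2 {x y : B} (hx : x ∈ Bb) (hy : y ∈ Bb) (hxy : x ≠ y) :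
    min (vsum v x X) (vsum v y X) ≤ V2 v Bb X := by
  rw [V2, dif_pos ⟨x, hx⟩]
  refine le_inf' _ _ fun c _ => ?_
  rcases eq_or_ne x c with rfl | hxc
  · exact (min_le_right _ _).trans (vsum_le_V1 (mem_erase.2 ⟨hxy.symm, hy⟩))
  · exact (min_le_left _ _).trans (vsum_le_V1 (mem_erase.2 ⟨hxc, hx⟩))

theorem one_le_V2_singleton (hv : ∀ b g, v b g ≤ 1) {g : G} (hg : 2 ≤ ∑ b ∈ Bb, v b g) :
    1 ≤ V2 v Bb {g} := by
  have hcard : 1 < #{b ∈ Bb | v b g = 1} := by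
    rw [card_filter]
    calc 1 < ∑ b ∈ Bb, v b g := hg
      _ ≤ _ := sum_le_sum fun b _ => by have := hv b g; split_ifs <;> omega
  obtain ⟨x, hx, y, hy, hxy⟩ := one_lt_card.1 hcard
  rw [mem_filter] at hx hy
  simpa [vsum, hx.2, hy.2] using min_le_V2 (v := v) (X := {g}) hx.1 hy.1 hxy

end Valuations

section Pairing

variable {B G : Type*} [DecidableEq B] [DecidableEq G] {v : B → G → ℕ} {Bb : Finset B}
  {X : Finset G}

def PaysForDemand (v : B → G → ℕ) (Bb : Finset B) (X : Finset G) (P : Finpartition X) : Prop :=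
  ∑ g ∈ X, min (∑ b ∈ Bb, v b g) 2 ≤ 2 * ∑ u ∈ P.parts, V2 v Bb u + V1 v Bb X

theorem paysForDemand_bot
    (h : ∀ x ∈ Bb, ∀ y ∈ Bb, 0 < vsum v x X → 0 < vsum v y X → x = y) :
    PaysForDemand v Bb X ⊥ :=
  calc ∑ g ∈ X, min (∑ b ∈ Bb, v b g) 2 ≤ ∑ g ∈ X, ∑ b ∈ Bb, v b g :=
        sum_le_sum fun _ _ => min_le_left _ _
    _ = ∑ b ∈ Bb, vsum v b X := sum_comm
    _ ≤ V1 v Bb X := sum_vsum_le_V1 h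
    _ ≤ _ := Nat.le_add_left _ _

theorem card_two_le_demand_le_sum_V2_bot (hv : ∀ b g, v b g ≤ 1) (Bb : Finset B)
    (X : Finset G) :
    #{g ∈ X | 2 ≤ ∑ b ∈ Bb, v b g} ≤ ∑ u ∈ (⊥ : Finpartition X).parts, V2 v Bb u := by
  rw [card_filter, Finpartition.parts_bot, sum_map]
  exact sum_le_sum fun g _ => by
    split_ifs with hg
    · exact one_le_V2_singleton hv hg
    · exact Nat.zero_le _

theorem exists_paysForDemand_of_erase (hv : ∀ b g, v b g ≤ 1) {g : G} (hg : g ∈ X)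
    (hdg : 2 ≤ ∑ b ∈ Bb, v b g) (h : ∃ P, PaysForDemand v Bb (X.erase g) P) :
    ∃ P, PaysForDemand v Bb X P := by
  obtain ⟨P, hP⟩ := h
  refine ⟨P.extend (singleton_ne_empty g) (disjoint_singleton_right.2 (notMem_erase g X))
    (by simp [hg]), ?_⟩
  have hV2 := one_le_V2_singleton hv hdg
  have hV1 : V1 v Bb (X.erase g) ≤ V1 v Bb X :=
    Finset.sup_mono_fun fun b _ => sum_le_sum_of_subset (erase_subset g X)
  unfold PaysForDemand at hP ⊢
  rw [← add_sum_erase X _ hg, P.sum_extend]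
  omega

theorem exists_paysForDemand_of_pair (hlow : ∀ g ∈ X, ∑ b ∈ Bb, v b g ≤ 1) {x y : B}
    (hx : x ∈ Bb) (hy : y ∈ Bb.erase x) (hxmax : ∀ b ∈ Bb, vsum v b X ≤ vsum v x X)
    (hymax : ∀ b ∈ Bb.erase x, vsum v b X ≤ vsum v y X) (hy0 : 0 < vsum v y X)
    (ih : ∀ X' ⊂ X, ∃ P, PaysForDemand v Bb X' P) :
    ∃ P, PaysForDemand v Bb X P := by
  set X' := {g ∈ X | v x g + v y g = 0}
  set u := {g ∈ X | ¬v x g + v y g = 0}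
  obtain ⟨g₀, hg₀X, hg₀⟩ := exists_ne_zero_of_sum_ne_zero hy0.ne'
  have hu : u ≠ ∅ := ne_empty_of_mem (a := g₀) (mem_filter.2 ⟨hg₀X, by omega⟩)
  obtain ⟨P, hP⟩ := ih X' (filter_ssubset.2 ⟨g₀, hg₀X, by omega⟩)
  refine ⟨P.extend hu (disjoint_filter_filter_not X X _) (filter_union_filter_not_eq _ X), ?_⟩
  have hsplit (f : G → ℕ) : ∑ g ∈ X, f g = ∑ g ∈ X', f g + ∑ g ∈ u, f g :=
    (sum_filter_add_sum_filter_not X _ f).symm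
  have hX'x : vsum v x X' = 0 := sum_eq_zero fun g hg => by have := (mem_filter.1 hg).2; omega
  have hX'y : vsum v y X' = 0 := sum_eq_zero fun g hg => by have := (mem_filter.1 hg).2; omega
  have hux : vsum v x X = vsum v x u := by unfold vsum at hX'x ⊢; rw [hsplit, hX'x, zero_add]
  have huy : vsum v y X = vsum v y u := by unfold vsum at hX'y ⊢; rw [hsplit, hX'y, zero_add]
  -- a good of `u` is valued by `x` or `y`, hence by nobody else
  have hu_demand : ∑ g ∈ u, min (∑ b ∈ Bb, v b g) 2 ≤ vsum v x u + vsum v y u := by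
    rw [vsum, vsum, ← sum_add_distrib]
    refine sum_le_sum fun g hg => ?_
    have := hlow g (mem_filter.1 hg).1
    have := (mem_filter.1 hg).2
    omega
  have hV1X' : V1 v Bb X' ≤ vsum v y X := Finset.sup_le fun b hb => by
    rcases eq_or_ne b x with rfl | hbx
    · exact hX'x.le.trans (Nat.zero_le _)
    · exact (sum_le_sum_of_subset (filter_subset _ X)).trans (hymax b (mem_erase.2 ⟨hbx, hb⟩))
  have hV2 := min_le_V2 (v := v) (X := u) hx (mem_of_mem_erase hy) (ne_of_mem_erase hy).symm
  have hV1 := vsum_le_V1 (v := v) (X := X) hx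
  have hyx := hxmax y (mem_of_mem_erase hy)
  unfold PaysForDemand at hP ⊢
  rw [hsplit, P.sum_extend]
  omega

theorem exists_paysForDemand (hv : ∀ b g, v b g ≤ 1) (Bb : Finset B) (X : Finset G) :
    ∃ P, PaysForDemand v Bb X P := by
  induction X using Finset.strongInduction with | H X ih => ?_
  by_cases hhigh : ∃ g ∈ X, 2 ≤ ∑ b ∈ Bb, v b g
  · obtain ⟨g, hg, hdg⟩ := hhigh
    exact exists_paysForDemand_of_erase hv hg hdg (ih _ (erase_ssubset hg))
  push Not at hhigh
  by_cases hpair : ∃ x ∈ Bb, ∃ y ∈ Bb, x ≠ y ∧ 0 < vsum v x X ∧ 0 < vsum v y X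
  · obtain ⟨x₀, hx₀, y₀, hy₀, hne, hx₀pos, hy₀pos⟩ := hpair
    obtain ⟨x, hx, hxmax⟩ := Bb.exists_max_image (vsum v · X) ⟨x₀, hx₀⟩
    have hsecond : ∃ b ∈ Bb.erase x, 0 < vsum v b X := by
      by_cases hx₀x : x₀ = x
      · exact ⟨y₀, mem_erase.2 ⟨hx₀x ▸ hne.symm, hy₀⟩, hy₀pos⟩
      · exact ⟨x₀, mem_erase.2 ⟨hx₀x, hx₀⟩, hx₀pos⟩
    obtain ⟨b, hb, hbpos⟩ := hsecond
    obtain ⟨y, hy, hymax⟩ := (Bb.erase x).exists_max_image (vsum v · X) ⟨b, hb⟩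
    exact exists_paysForDemand_of_pair (fun g hg => Nat.le_of_lt_succ (hhigh g hg)) hx hy hxmax
      hymax (hbpos.trans_le (hymax b hb)) ih
  · exact ⟨⊥, paysForDemand_bot fun x hx y hy hx0 hy0 =>
      by_contra fun hne => hpair ⟨x, hx, y, hy, hne, hx0, hy0⟩⟩

end Pairing

theorem sum_min_le_sum_min_two_add {G : Type*} (X : Finset G) (f : G → ℕ) {s : ℕ} (hs : 2 ≤ s) :
    ∑ g ∈ X, min (f g) s ≤ ∑ g ∈ X, min (f g) 2 + (s - 2) * #{g ∈ X | 2 ≤ f g} := by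
  rw [card_filter, mul_sum, ← sum_add_distrib]
  refine sum_le_sum fun g _ => ?_
  split_ifs <;> omega

section Market

variable {B G S : Type*} [Fintype B] [Fintype G] [Fintype S] [DecidableEq G] [DecidableEq S]
  {v : B → G → ℕ}

theorem sum_V1_buyersOf_le (hv : ∀ b g, v b g ≤ 1) (τ : S → Finpartition (univ : Finset G))
    (σ : B → S) :
    ∑ s, ∑ u ∈ (τ s).parts, V1 v (buyersOf σ s) u ≤ ∑ g, min (∑ b, v b g) (Fintype.card S) :=
  calc ∑ s, ∑ u ∈ (τ s).parts, V1 v (buyersOf σ s) u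
      ≤ ∑ s, ∑ u ∈ (τ s).parts, ∑ g ∈ u, min 1 (∑ b ∈ buyersOf σ s, v b g) :=
        sum_le_sum fun _ _ => sum_le_sum fun _ _ => V1_le_sum_min_one hv
    _ = ∑ g, ∑ s, min 1 (∑ b ∈ buyersOf σ s, v b g) := by
        simp_rw [Finpartition.sum_sum_parts]
        exact sum_comm
    _ ≤ ∑ g, min (∑ b, v b g) (Fintype.card S) := sum_le_sum fun g _ => le_min
        ((sum_le_sum fun _ _ => min_le_right _ _).trans_eq (sum_fiberwise univ σ (v · g)))
        ((sum_le_sum fun _ _ => min_le_left _ _).trans_eq (by simp))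

theorem sum_V2_le_of_rev1_le [DecidableEq B] [Nonempty G] {π π' : Finpartition (univ : Finset G)}
    (h : rev1 v π' ≤ rev1 v π) :
    ∑ u ∈ π'.parts, V2 v univ u ≤ ∑ t ∈ π.parts, V2 v univ t := by
  have hG : (0 : ℚ) < (Fintype.card G : ℚ)⁻¹ := inv_pos.2 (Nat.cast_pos.2 Fintype.card_pos)
  exact_mod_cast le_of_mul_le_mul_left h hG

theorem card_mul_SWm (hS : Fintype.card S ≠ 0) (τ : S → Finpartition (univ : Finset G))
    (σ : B → S) :
    (Fintype.card S : ℚ) * SWm v τ σ =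
      (Fintype.card G : ℚ)⁻¹ * ∑ s, ∑ u ∈ (τ s).parts, (V1 v (buyersOf σ s) u : ℚ) := by
  rw [SWm, mul_inv, ← mul_assoc, ← mul_assoc, mul_inv_cancel₀ (Nat.cast_ne_zero.2 hS), one_mul]

end Market

theorem competition_gain_le_general [Nonempty G]
    (v : B → G → ℕ) (hv : ∀ b g, v b g ≤ 1)
    (hS : 2 ≤ Fintype.card S)
    (πhat : Finpartition (univ : Finset G))
    (hmax : ∀ π' : Finpartition (univ : Finset G), rev1 v π' ≤ rev1 v πhat)
    (τ : S → Finpartition (univ : Finset G)) (σ : B → S) :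
    (Fintype.card S : ℚ) * SWm v τ σ ≤ ((Fintype.card S : ℚ) + 1) * SW1 v πhat := by
  set W := ∑ t ∈ πhat.parts, V1 v univ t
  set R := ∑ t ∈ πhat.parts, V2 v univ t
  obtain ⟨P, hP⟩ := exists_paysForDemand hv univ univ
  have hPR : ∑ u ∈ P.parts, V2 v univ u ≤ R := sum_V2_le_of_rev1_le (hmax P)
  have hRW : R ≤ W := sum_le_sum fun _ _ => V2_le_V1
  have hV1W : V1 v univ univ ≤ W := V1_le_sum_parts πhat
  have hpdem : pdem v 2 ≤ R :=
    (card_two_le_demand_le_sum_V2_bot hv univ univ).trans (sum_V2_le_of_rev1_le (hmax ⊥))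
  have hN : ∑ s, ∑ u ∈ (τ s).parts, V1 v (buyersOf σ s) u ≤ (Fintype.card S + 1) * W :=
    calc _ ≤ ∑ g, min (∑ b, v b g) 2 + (Fintype.card S - 2) * pdem v 2 :=
          (sum_V1_buyersOf_le hv τ σ).trans (sum_min_le_sum_min_two_add univ _ hS)
      _ ≤ 3 * W + (Fintype.card S - 2) * W := by
          unfold PaysForDemand at hP
          gcongr
          · omega
          · exact hpdem.trans hRW
      _ = (Fintype.card S + 1) * W := by rw [← add_mul]; congr 1; omega
  rw [card_mul_SWm (by omega), SW1, mul_left_comm]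
  gcongr
  exact_mod_cast hN

/-- competition exceeds the welfare of a revenue-maximizing
monopoly by a factor of at most `1 + 1/|S|`. -/
theorem competition_gain_le [Nonempty B] [Nonempty G] [Nonempty S]
    (v : B → G → ℕ) (hv : ∀ b g, v b g ≤ 1)
    (hB : 2 ≤ Fintype.card B) (hS : 2 ≤ Fintype.card S)
    (πhat : Finpartition (univ : Finset G))
    (hmax : ∀ π' : Finpartition (univ : Finset G), rev1 v π' ≤ rev1 v πhat)
    (τ : S → Finpartition (univ : Finset G)) (σ : B → S) :
    (Fintype.card S : ℚ) * SWm v τ σ ≤ ((Fintype.card S : ℚ) + 1) * SW1 v πhat :=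
  competition_gain_le_general v hv hS πhat hmax τ σ
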